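/- arXiv:1802.00929 — 5 statements merged into one kernel-verified Lean document; each statement's English description precedes it below -/
import Mathlib

section
/- Let W > 0, let N_p and K be positive integers, and set M = N_p + K. Let S : {0,…,N_p−1} → ℂ, and define the analog pilot signal S_A(t) = Σ_{n=0}^{M−1} S[n mod N_p] · sinc(Wt − n), where sinc(u) = sin(πu)/(πu) for u ≠ 0 and sinc(0) = 1. Suppose the channel has P paths with complex gains h_i' ∈ ℂ, delays τ_i = δ_i/W with δ_i ∈ ℤ and 0 ≤ δ_i ≤ K, and Doppler shifts ν_i = (W/N_p)·ω_i with ω_i ∈ ℤ, for i = 1,…,P, and the noiseless received signal is R_A(t) = Σ_{i=1}^P h_i' e^{2πi ν_i t} S_A(t − τ_i). Then the samples R[n] := R_A((K+n)/W), for n = 0, 1, …, N_p−1, satisfy R[n] = Σ_{i=1}^P α_i e^{2πi ω_i n / N_p} S[(K + n − δ_i) mod N_p], where α_i = h_i' e^{2πi ν_i K / W}. -/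
/-! Sampling the band-limited pilot at the grid points `d / W` recovers its samples because
`sinc` vanishes at every nonzero integer; the Doppler phase at `(K + n) / W` splits into a
constant factor and the discrete modulation `e^{2πi ω n / N_p}` because `ν / W = ω / N_p`. -/

open Finset

/-- The normalized sinc function: `sinc u = sin (π u) / (π u)` for `u ≠ 0`, `sinc 0 = 1`. -/
noncomputable def sinc (u : ℝ) : ℝ :=
  if u = 0 then 1 else Real.sin (Real.pi * u) / (Real.pi * u)

lemma sinc_intCast (m : ℤ) : sinc m = if m = 0 then 1 else 0 := by
  unfold sinc
  rcases eq_or_ne m 0 with h | h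
  · simp [h]
  · rw [if_neg (by exact_mod_cast h), if_neg (by exact_mod_cast h),
      mul_comm, Real.sin_int_mul_pi, zero_div]

lemma sum_mul_sinc_natCast_sub {s : Finset ℕ} {d : ℕ} (hd : d ∈ s) (c : ℕ → ℂ) :
    ∑ m ∈ s, c m * (sinc ((d : ℝ) - m) : ℂ) = c d := by
  rw [sum_eq_single_of_mem d hd]
  · simpa using congrArg (fun x : ℝ => c d * (x : ℂ)) (sinc_intCast 0)
  · intro m _ hm
    have hsinc : sinc ((d : ℝ) - m) = 0 := by
      rw [show (d : ℝ) - m = ((d - m : ℤ) : ℝ) by push_cast; ring, sinc_intCast,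
        if_neg (by omega)]
    simp [hsinc]

noncomputable def sincInterpolation (W : ℝ) (N : ℕ) (c : ℕ → ℂ) (t : ℝ) : ℂ :=
  ∑ m ∈ range N, c m * (sinc (W * t - m) : ℂ)

lemma sincInterpolation_natCast_div {W : ℝ} (hW : W ≠ 0) {N d : ℕ} (hd : d < N)
    (c : ℕ → ℂ) : sincInterpolation W N c (d / W) = c d := by
  rw [sincInterpolation, mul_div_cancel₀ _ hW]
  exact sum_mul_sinc_natCast_sub (mem_range.mpr hd) c

lemma exp_doppler_phase_add {W ν : ℝ} (hW : W ≠ 0) {Np : ℕ} {ω : ℤ}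
    (hν : ν = W / Np * ω) (a b : ℝ) :
    Complex.exp (2 * Real.pi * Complex.I * ν * (((a + b) / W : ℝ) : ℂ)) =
      Complex.exp (2 * Real.pi * Complex.I * ν * a / W) *
        Complex.exp (2 * Real.pi * Complex.I * ω * b / Np) := by
  have hWc : (W : ℂ) ≠ 0 := by exact_mod_cast hW
  have hb : (ν : ℂ) * b / W = ω * b / Np := by
    rw [hν]; push_cast; field_simp
  rw [← Complex.exp_add]
  congr 1
  push_cast
  linear_combination 2 * Real.pi * Complex.I * hb

theorem discrete_delay_doppler_channel_model_general
    (W : ℝ) (hW : 0 < W)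
    (Np K : ℕ)
    (S : ℕ → ℂ)
    (P : ℕ) (h' : Fin P → ℂ)
    (δ : Fin P → ℕ) (hδ : ∀ i, δ i ≤ K)
    (ω : Fin P → ℤ)
    (τ : Fin P → ℝ) (hτ : ∀ i, τ i = (δ i : ℝ) / W)
    (ν : Fin P → ℝ) (hν : ∀ i, ν i = (W / (Np : ℝ)) * (ω i : ℝ))
    (SA RA : ℝ → ℂ)
    (hSA : ∀ t : ℝ, SA t = ∑ n ∈ Finset.range (Np + K),
      S (n % Np) * ((sinc (W * t - (n : ℝ)) : ℝ) : ℂ))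
    (hRA : ∀ t : ℝ, RA t = ∑ i : Fin P,
      h' i * Complex.exp (2 * Real.pi * Complex.I * (ν i : ℂ) * (t : ℂ)) * SA (t - τ i)) :
    ∀ n : ℕ, n < Np →
      RA (((K : ℝ) + (n : ℝ)) / W) =
        ∑ i : Fin P,
          (h' i * Complex.exp (2 * Real.pi * Complex.I * (ν i : ℂ) * (K : ℂ) / (W : ℂ))) *
            Complex.exp (2 * Real.pi * Complex.I * (ω i : ℂ) * (n : ℂ) / (Np : ℂ)) *
            S ((K + n - δ i) % Np) := by
  intro n hn
  have hSA' : SA = sincInterpolation W (Np + K) (fun m => S (m % Np)) := funext hSA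
  rw [hRA]
  refine sum_congr rfl fun i _ => ?_
  have hshift : ((K : ℝ) + n) / W - τ i = ((K + n - δ i : ℕ) : ℝ) / W := by
    rw [hτ, Nat.cast_sub (by linarith [hδ i])]; push_cast; ring
  rw [hshift, hSA', sincInterpolation_natCast_div hW.ne' (by omega),
    exp_doppler_phase_add hW.ne' (hν i)]
  push_cast
  ring

/-- Discrete delay-Doppler channel model: sampling the sinc-interpolated pilot after
a `P`-path delay-Doppler channel yields a cyclic shift-and-modulate model. -/
theorem discrete_delay_doppler_channel_model
    (W : ℝ) (hW : 0 < W)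
    (Np K : ℕ) (hNp : 0 < Np) (hK : 0 < K)
    (S : ℕ → ℂ)
    (P : ℕ) (h' : Fin P → ℂ)
    (δ : Fin P → ℕ) (hδ : ∀ i, δ i ≤ K)
    (ω : Fin P → ℤ)
    (τ : Fin P → ℝ) (hτ : ∀ i, τ i = (δ i : ℝ) / W)
    (ν : Fin P → ℝ) (hν : ∀ i, ν i = (W / (Np : ℝ)) * (ω i : ℝ))
    (SA RA : ℝ → ℂ)
    (hSA : ∀ t : ℝ, SA t = ∑ n ∈ Finset.range (Np + K),
      S (n % Np) * ((sinc (W * t - (n : ℝ)) : ℝ) : ℂ))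
    (hRA : ∀ t : ℝ, RA t = ∑ i : Fin P,
      h' i * Complex.exp (2 * Real.pi * Complex.I * (ν i : ℂ) * (t : ℂ)) * SA (t - τ i)) :
    ∀ n : ℕ, n < Np →
      RA (((K : ℝ) + (n : ℝ)) / W) =
        ∑ i : Fin P,
          (h' i * Complex.exp (2 * Real.pi * Complex.I * (ν i : ℂ) * (K : ℂ) / (W : ℂ))) *
            Complex.exp (2 * Real.pi * Complex.I * (ω i : ℂ) * (n : ℂ) / (Np : ℂ)) *
            S ((K + n - δ i) % Np) :=
  discrete_delay_doppler_channel_model_general W hW Np K S P h' δ hδ ω τ hτ ν hν SA RA hSA hRA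
end

section
/- With the above definitions, for all integers k, l with 0 ≤ k ≤ N−1 and 0 ≤ l ≤ M−1: x̂[k,l] = (1/(MN)) Σ_{n=0}^{N−1} Σ_{m=0}^{M−1} x[n,m] · h_w((l−m)/(MΔf), (k−n)/(NT)). -/
open Finset

private lemma exp_key (N M : ℕ) (hN : 0 < N) (hM : 0 < M)
    (T Δf : ℝ) (hT : T ≠ 0) (hΔf : Δf ≠ 0)
    (νi τi : ℝ) (n m np mp k l : ℕ) :
    Complex.exp (2 * Real.pi * Complex.I * ((νi * n * T : ℝ) : ℂ)) *
      Complex.exp (-(2 * Real.pi * Complex.I) * (((νi + m * Δf) * τi : ℝ) : ℂ)) *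
      Complex.exp (2 * Real.pi * Complex.I *
        (((n * np : ℕ) : ℂ) / (N : ℂ) - ((m * mp : ℕ) : ℂ) / (M : ℂ))) *
      Complex.exp (-(2 * Real.pi * Complex.I) *
        (((n * k : ℕ) : ℂ) / (N : ℂ) - ((m * l : ℕ) : ℂ) / (M : ℂ))) =
    Complex.exp (-(2 * Real.pi * Complex.I) * ((νi * τi : ℝ) : ℂ)) *
      Complex.exp (-(2 * Real.pi * Complex.I) *
        (((((k : ℝ) - (np : ℝ)) / ((N : ℝ) * T) - νi) * n * T -
          ((((l : ℝ) - (mp : ℝ)) / ((M : ℝ) * Δf)) - τi) * m * Δf : ℝ) : ℂ)) := by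
  rw [← Complex.exp_add, ← Complex.exp_add, ← Complex.exp_add, ← Complex.exp_add]
  congr 1
  have hN' : (N : ℂ) ≠ 0 := Nat.cast_ne_zero.2 hN.ne'
  have hM' : (M : ℂ) ≠ 0 := Nat.cast_ne_zero.2 hM.ne'
  have hT' : (T : ℂ) ≠ 0 := Complex.ofReal_ne_zero.2 hT
  have hΔf' : (Δf : ℂ) ≠ 0 := Complex.ofReal_ne_zero.2 hΔf
  push_cast
  field_simp
  ring

private lemma sum_triple {α₃ α₄ α₅ β : Type*} [AddCommMonoid β]
    (s₃ : Finset α₃) (s₄ : Finset α₄) (s₅ : Finset α₅) (g : α₃ → α₄ → α₅ → β) :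
    (∑ q ∈ (s₃ ×ˢ s₄) ×ˢ s₅, g q.1.1 q.1.2 q.2)
      = ∑ c ∈ s₃, ∑ d ∈ s₄, ∑ e ∈ s₅, g c d e := by
  rw [Finset.sum_product, Finset.sum_product]

private lemma sum_perm5b {α₁ α₂ α₃ α₄ α₅ β : Type*} [AddCommMonoid β]
    (s₁ : Finset α₁) (s₂ : Finset α₂) (s₃ : Finset α₃) (s₄ : Finset α₄) (s₅ : Finset α₅)
    (f : α₁ → α₂ → α₃ → α₄ → α₅ → β) :
    (∑ a ∈ s₁, ∑ b ∈ s₂, ∑ c ∈ s₃, ∑ d ∈ s₄, ∑ e ∈ s₅, f a b c d e)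
      = ∑ c ∈ s₃, ∑ d ∈ s₄, ∑ e ∈ s₅, ∑ a ∈ s₁, ∑ b ∈ s₂, f a b c d e := by
  have h1 : (∑ p ∈ s₁ ×ˢ s₂, ∑ q ∈ (s₃ ×ˢ s₄) ×ˢ s₅, f p.1 p.2 q.1.1 q.1.2 q.2)
      = ∑ a ∈ s₁, ∑ b ∈ s₂, ∑ c ∈ s₃, ∑ d ∈ s₄, ∑ e ∈ s₅, f a b c d e := by
    rw [Finset.sum_product]
    exact Finset.sum_congr rfl fun a _ => Finset.sum_congr rfl fun b _ =>
      sum_triple _ _ _ _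
  have h2 : (∑ q ∈ (s₃ ×ˢ s₄) ×ˢ s₅, ∑ p ∈ s₁ ×ˢ s₂, f p.1 p.2 q.1.1 q.1.2 q.2)
      = ∑ c ∈ s₃, ∑ d ∈ s₄, ∑ e ∈ s₅, ∑ a ∈ s₁, ∑ b ∈ s₂, f a b c d e := by
    rw [sum_triple (s₃ := s₃) (s₄ := s₄) (s₅ := s₅)
      (g := fun c d e => ∑ p ∈ s₁ ×ˢ s₂, f p.1 p.2 c d e)]
    exact Finset.sum_congr rfl fun c _ => Finset.sum_congr rfl fun d _ =>
      Finset.sum_congr rfl fun e _ => Finset.sum_product _ _ _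
  rw [← h1, ← h2]
  exact Finset.sum_comm

/-- OTFS input-output relation in the delay-Doppler domain: with windowed
ISFFT modulation, multiplicative time-frequency channel, and windowed SFFT
demodulation, the demodulated symbols are the 2D (delay-Doppler) twisted
convolution of the input symbols with the windowed channel response `h_w`. -/
theorem otfs_input_output_relation
    (N M : ℕ) (hN : 0 < N) (hM : 0 < M)
    (T Δf : ℝ) (hT : 0 < T) (hΔf : 0 < Δf)
    (x : ℕ → ℕ → ℂ)
    (P : ℕ) (h : Fin P → ℂ) (τ ν : Fin P → ℝ)
    (Wtx Wrx : ℕ → ℕ → ℂ)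
    (X : ℕ → ℕ → ℂ)
    (hX : ∀ n m : ℕ, X n m = Wtx n m * ((1 : ℂ) / ((M : ℂ) * (N : ℂ))) *
      ∑ k ∈ Finset.range N, ∑ l ∈ Finset.range M,
        x k l * Complex.exp (2 * Real.pi * Complex.I *
          (((n * k : ℕ) : ℂ) / (N : ℂ) - ((m * l : ℕ) : ℂ) / (M : ℂ))))
    (Hc : ℕ → ℕ → ℂ)
    (hHc : ∀ n m : ℕ, Hc n m = ∑ i : Fin P,
      h i * Complex.exp (2 * Real.pi * Complex.I * ((ν i * n * T : ℝ) : ℂ)) *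
        Complex.exp (-(2 * Real.pi * Complex.I) * (((ν i + m * Δf) * τ i : ℝ) : ℂ)))
    (Y : ℕ → ℕ → ℂ) (hY : ∀ n m : ℕ, Y n m = Hc n m * X n m)
    (xhat : ℕ → ℕ → ℂ)
    (hxhat : ∀ k l : ℕ, xhat k l = ∑ n ∈ Finset.range N, ∑ m ∈ Finset.range M,
      Wrx n m * Y n m * Complex.exp (-(2 * Real.pi * Complex.I) *
        (((n * k : ℕ) : ℂ) / (N : ℂ) - ((m * l : ℕ) : ℂ) / (M : ℂ))))
    (w : ℝ → ℝ → ℂ)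
    (hw : ∀ τ' ν' : ℝ, w τ' ν' = ∑ n ∈ Finset.range N, ∑ m ∈ Finset.range M,
      Wtx n m * Wrx n m * Complex.exp (-(2 * Real.pi * Complex.I) *
        ((ν' * n * T - τ' * m * Δf : ℝ) : ℂ)))
    (hw_ch : ℝ → ℝ → ℂ)
    (hhw : ∀ τ' ν' : ℝ, hw_ch τ' ν' = ∑ i : Fin P,
      h i * Complex.exp (-(2 * Real.pi * Complex.I) * ((ν i * τ i : ℝ) : ℂ)) *
        w (τ' - τ i) (ν' - ν i)) :
    ∀ k < N, ∀ l < M,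
      xhat k l = ((1 : ℂ) / ((M : ℂ) * (N : ℂ))) *
        ∑ n ∈ Finset.range N, ∑ m ∈ Finset.range M,
          x n m * hw_ch (((l : ℝ) - (m : ℝ)) / ((M : ℝ) * Δf))
            (((k : ℝ) - (n : ℝ)) / ((N : ℝ) * T)) := by
  intro k hk l hl
  have hT' : T ≠ 0 := ne_of_gt hT
  have hΔf' : Δf ≠ 0 := ne_of_gt hΔf
  have L : xhat k l = ∑ n ∈ Finset.range N, ∑ m ∈ Finset.range M,
      ∑ np ∈ Finset.range N, ∑ mp ∈ Finset.range M, ∑ i : Fin P,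
      (1 : ℂ) / ((M : ℂ) * (N : ℂ)) * (x np mp * h i * Wtx n m * Wrx n m *
        (Complex.exp (-(2 * Real.pi * Complex.I) * ((ν i * τ i : ℝ) : ℂ)) *
         Complex.exp (-(2 * Real.pi * Complex.I) *
           (((((k : ℝ) - (np : ℝ)) / ((N : ℝ) * T) - ν i) * n * T -
             ((((l : ℝ) - (mp : ℝ)) / ((M : ℝ) * Δf)) - τ i) * m * Δf : ℝ) : ℂ)))) := by
    rw [hxhat]
    refine Finset.sum_congr rfl fun n _ => Finset.sum_congr rfl fun m _ => ?_
    rw [hY, hHc, hX]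
    simp only [Finset.sum_mul, Finset.mul_sum]
    refine Finset.sum_congr rfl fun np _ => Finset.sum_congr rfl fun mp _ =>
      Finset.sum_congr rfl fun i _ => ?_
    linear_combination ((1 : ℂ) / ((M : ℂ) * (N : ℂ)) * x np mp * h i * Wtx n m * Wrx n m) *
      exp_key N M hN hM T Δf hT' hΔf' (ν i) (τ i) n m np mp k l
  have R : (((1 : ℂ) / ((M : ℂ) * (N : ℂ))) *
        ∑ n ∈ Finset.range N, ∑ m ∈ Finset.range M,
          x n m * hw_ch (((l : ℝ) - (m : ℝ)) / ((M : ℝ) * Δf))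
            (((k : ℝ) - (n : ℝ)) / ((N : ℝ) * T)))
      = ∑ np ∈ Finset.range N, ∑ mp ∈ Finset.range M, ∑ i : Fin P,
        ∑ n ∈ Finset.range N, ∑ m ∈ Finset.range M,
      (1 : ℂ) / ((M : ℂ) * (N : ℂ)) * (x np mp * h i * Wtx n m * Wrx n m *
        (Complex.exp (-(2 * Real.pi * Complex.I) * ((ν i * τ i : ℝ) : ℂ)) *
         Complex.exp (-(2 * Real.pi * Complex.I) *
           (((((k : ℝ) - (np : ℝ)) / ((N : ℝ) * T) - ν i) * n * T -
             ((((l : ℝ) - (mp : ℝ)) / ((M : ℝ) * Δf)) - τ i) * m * Δf : ℝ) : ℂ)))) := by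
    rw [Finset.mul_sum]
    refine Finset.sum_congr rfl fun np _ => ?_
    rw [Finset.mul_sum]
    refine Finset.sum_congr rfl fun mp _ => ?_
    rw [hhw]
    simp only [hw, Finset.sum_mul, Finset.mul_sum]
    refine Finset.sum_congr rfl fun i _ => Finset.sum_congr rfl fun n _ =>
      Finset.sum_congr rfl fun m _ => ?_
    ring
  rw [L, R]
  exact sum_perm5b (Finset.range N) (Finset.range M) (Finset.range N)
    (Finset.range M) Finset.univ (fun n m np mp i =>
      (1 : ℂ) / ((M : ℂ) * (N : ℂ)) * (x np mp * h i * Wtx n m * Wrx n m *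
        (Complex.exp (-(2 * Real.pi * Complex.I) * ((ν i * τ i : ℝ) : ℂ)) *
         Complex.exp (-(2 * Real.pi * Complex.I) *
           (((((k : ℝ) - (np : ℝ)) / ((N : ℝ) * T) - ν i) * n * T -
             ((((l : ℝ) - (mp : ℝ)) / ((M : ℝ) * Δf)) - τ i) * m * Δf : ℝ) : ℂ)))))
end

section
/- Assume in addition that the windows are rectangular, W_tx[n,m] = W_rx[n,m] = 1 for all n, m, and that the delays and Dopplers lie on the delay-Doppler lattice: τ_i = a_i/(MΔf) and ν_i = b_i/(NT) with a_i, b_i ∈ ℤ for every i = 1,…,P. Then for all integers k, l with 0 ≤ k ≤ N−1 and 0 ≤ l ≤ M−1: x̂[k,l] = Σ_{i=1}^P h_i' · x[(k − b_i) mod N, (l − a_i) mod M], where h_i' = h_i e^{−2πi ν_i τ_i}. In particular, in the delay-Doppler domain the channel acts as a 2D circular shift-and-scale (no intersymbol mixing beyond the P cyclic taps). -/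
open Finset

lemma expSumOrtho (N : ℕ) (hN : 0 < N) (c : ℤ) :
    ∑ n ∈ Finset.range N, Complex.exp (2 * Real.pi * Complex.I * ((c : ℂ) * n / N)) =
      if (N : ℤ) ∣ c then (N : ℂ) else 0 := by
  have hNc : (N : ℂ) ≠ 0 := Nat.cast_ne_zero.mpr hN.ne'
  have h2 : (2 * (Real.pi : ℂ) * Complex.I) ≠ 0 := by
    simp [Real.pi_ne_zero, Complex.I_ne_zero]
  set z := Complex.exp (2 * Real.pi * Complex.I * ((c : ℂ) / N)) with hz
  have hzn : ∀ n : ℕ, Complex.exp (2 * Real.pi * Complex.I * ((c : ℂ) * n / N)) = z ^ n := by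
    intro n
    rw [hz, ← Complex.exp_nat_mul]
    ring_nf
  simp_rw [hzn]
  by_cases hd : (N : ℤ) ∣ c
  · obtain ⟨d, hdd⟩ := hd
    have hz1 : z = 1 := by
      rw [hz]
      have : 2 * Real.pi * Complex.I * ((c : ℂ) / N) = d * (2 * Real.pi * Complex.I) := by
        rw [hdd]; push_cast; field_simp
      rw [this, Complex.exp_int_mul_two_pi_mul_I]
    rw [if_pos ⟨d, hdd⟩]
    simp [hz1]
  · have hz1 : z ≠ 1 := by
      intro h1
      rw [hz, Complex.exp_eq_one_iff] at h1
      obtain ⟨n, hn⟩ := h1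
      apply hd
      refine ⟨n, ?_⟩
      have hcn : (c : ℂ) / N = n := by
        apply mul_left_cancel₀ h2
        rw [hn]; ring
      have : (c : ℂ) = (N : ℂ) * n := by
        rw [← hcn]; field_simp
      exact_mod_cast this
    have hzN : z ^ N = 1 := by
      rw [hz, ← Complex.exp_nat_mul]
      have : (N : ℂ) * (2 * Real.pi * Complex.I * ((c : ℂ) / N)) = c * (2 * Real.pi * Complex.I) := by
        field_simp
      rw [this, Complex.exp_int_mul_two_pi_mul_I]
    rw [geom_sum_eq hz1]
    simp [hzN, hd]

lemma sumSwap5 {β : Type*} [AddCommMonoid β] {ι₁ ι₂ ι₃ ι₄ ι₅ : Type*}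
    (s₁ : Finset ι₁) (s₂ : Finset ι₂) (s₃ : Finset ι₃) (s₄ : Finset ι₄) (s₅ : Finset ι₅)
    (f : ι₁ → ι₂ → ι₃ → ι₄ → ι₅ → β) :
    ∑ a ∈ s₁, ∑ b ∈ s₂, ∑ c ∈ s₃, ∑ d ∈ s₄, ∑ e ∈ s₅, f a b c d e
      = ∑ c ∈ s₃, ∑ d ∈ s₄, ∑ e ∈ s₅, ∑ a ∈ s₁, ∑ b ∈ s₂, f a b c d e :=
  calc ∑ a ∈ s₁, ∑ b ∈ s₂, ∑ c ∈ s₃, ∑ d ∈ s₄, ∑ e ∈ s₅, f a b c d e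
      = ∑ a ∈ s₁, ∑ c ∈ s₃, ∑ b ∈ s₂, ∑ d ∈ s₄, ∑ e ∈ s₅, f a b c d e :=
        Finset.sum_congr rfl fun _ _ => Finset.sum_comm
    _ = ∑ c ∈ s₃, ∑ a ∈ s₁, ∑ b ∈ s₂, ∑ d ∈ s₄, ∑ e ∈ s₅, f a b c d e := Finset.sum_comm
    _ = ∑ c ∈ s₃, ∑ a ∈ s₁, ∑ d ∈ s₄, ∑ b ∈ s₂, ∑ e ∈ s₅, f a b c d e :=
        Finset.sum_congr rfl fun _ _ => Finset.sum_congr rfl fun _ _ => Finset.sum_comm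
    _ = ∑ c ∈ s₃, ∑ d ∈ s₄, ∑ a ∈ s₁, ∑ b ∈ s₂, ∑ e ∈ s₅, f a b c d e :=
        Finset.sum_congr rfl fun _ _ => Finset.sum_comm
    _ = ∑ c ∈ s₃, ∑ d ∈ s₄, ∑ a ∈ s₁, ∑ e ∈ s₅, ∑ b ∈ s₂, f a b c d e :=
        Finset.sum_congr rfl fun _ _ => Finset.sum_congr rfl fun _ _ =>
          Finset.sum_congr rfl fun _ _ => Finset.sum_comm
    _ = ∑ c ∈ s₃, ∑ d ∈ s₄, ∑ e ∈ s₅, ∑ a ∈ s₁, ∑ b ∈ s₂, f a b c d e :=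
        Finset.sum_congr rfl fun _ _ => Finset.sum_congr rfl fun _ _ => Finset.sum_comm

lemma sumSwap3 {β : Type*} [AddCommMonoid β] {ι₁ ι₂ ι₃ : Type*}
    (s₁ : Finset ι₁) (s₂ : Finset ι₂) (s₃ : Finset ι₃) (f : ι₁ → ι₂ → ι₃ → β) :
    ∑ a ∈ s₁, ∑ b ∈ s₂, ∑ c ∈ s₃, f a b c = ∑ c ∈ s₃, ∑ a ∈ s₁, ∑ b ∈ s₂, f a b c :=
  calc ∑ a ∈ s₁, ∑ b ∈ s₂, ∑ c ∈ s₃, f a b c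
      = ∑ a ∈ s₁, ∑ c ∈ s₃, ∑ b ∈ s₂, f a b c :=
        Finset.sum_congr rfl fun _ _ => Finset.sum_comm
    _ = ∑ c ∈ s₃, ∑ a ∈ s₁, ∑ b ∈ s₂, f a b c := Finset.sum_comm

lemma sumDeltaEval (R : ℕ) (j₀ : ℕ) (hmem : j₀ ∈ Finset.range R)
    (p : ℕ → Prop) [DecidablePred p] (hp : ∀ j ∈ Finset.range R, p j ↔ j = j₀)
    (c : ℂ) (f : ℕ → ℂ) :
    ∑ j ∈ Finset.range R, (if p j then c else 0) * f j = c * f j₀ := by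
  rw [Finset.sum_congr rfl fun j hj => by rw [if_congr (hp j hj) rfl rfl]]
  simp_rw [ite_mul, zero_mul]
  rw [Finset.sum_ite_eq' (Finset.range R) j₀ (fun j => c * f j), if_pos hmem]

/-- With rectangular windows and delays/Dopplers on the delay-Doppler lattice,
the OTFS channel acts as a 2D circular shift-and-scale: each path contributes a
cyclically shifted copy of the input symbols scaled by `h_i' = h_i e^{-2πi ν_i τ_i}`. -/
theorem otfs_integer_taps_circular_shift
    (N M : ℕ) (hN : 0 < N) (hM : 0 < M)
    (T Δf : ℝ) (hT : 0 < T) (hΔf : 0 < Δf)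
    (x : ℕ → ℕ → ℂ)
    (P : ℕ) (h : Fin P → ℂ) (τ ν : Fin P → ℝ)
    (a b : Fin P → ℤ)
    (hτ : ∀ i, τ i = (a i : ℝ) / ((M : ℝ) * Δf))
    (hν : ∀ i, ν i = (b i : ℝ) / ((N : ℝ) * T))
    (Wtx Wrx : ℕ → ℕ → ℂ)
    (hWtx : ∀ n m : ℕ, Wtx n m = 1) (hWrx : ∀ n m : ℕ, Wrx n m = 1)
    (X : ℕ → ℕ → ℂ)
    (hX : ∀ n m : ℕ, X n m = Wtx n m * ((1 : ℂ) / ((M : ℂ) * (N : ℂ))) *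
      ∑ k ∈ Finset.range N, ∑ l ∈ Finset.range M,
        x k l * Complex.exp (2 * Real.pi * Complex.I *
          (((n * k : ℕ) : ℂ) / (N : ℂ) - ((m * l : ℕ) : ℂ) / (M : ℂ))))
    (Hc : ℕ → ℕ → ℂ)
    (hHc : ∀ n m : ℕ, Hc n m = ∑ i : Fin P,
      h i * Complex.exp (2 * Real.pi * Complex.I * ((ν i * n * T : ℝ) : ℂ)) *
        Complex.exp (-(2 * Real.pi * Complex.I) * (((ν i + m * Δf) * τ i : ℝ) : ℂ)))
    (Y : ℕ → ℕ → ℂ) (hY : ∀ n m : ℕ, Y n m = Hc n m * X n m)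
    (xhat : ℕ → ℕ → ℂ)
    (hxhat : ∀ k l : ℕ, xhat k l = ∑ n ∈ Finset.range N, ∑ m ∈ Finset.range M,
      Wrx n m * Y n m * Complex.exp (-(2 * Real.pi * Complex.I) *
        (((n * k : ℕ) : ℂ) / (N : ℂ) - ((m * l : ℕ) : ℂ) / (M : ℂ)))) :
    ∀ k < N, ∀ l < M,
      xhat k l = ∑ i : Fin P,
        (h i * Complex.exp (-(2 * Real.pi * Complex.I) * ((ν i * τ i : ℝ) : ℂ))) *
          x ((((k : ℤ) - b i) % (N : ℤ)).toNat) ((((l : ℤ) - a i) % (M : ℤ)).toNat) := by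
  intro k hk l hl
  have hNc : (N : ℂ) ≠ 0 := Nat.cast_ne_zero.mpr hN.ne'
  have hMc : (M : ℂ) ≠ 0 := Nat.cast_ne_zero.mpr hM.ne'
  have hNr : (N : ℝ) ≠ 0 := Nat.cast_ne_zero.mpr hN.ne'
  have hMr : (M : ℝ) ≠ 0 := Nat.cast_ne_zero.mpr hM.ne'
  have hν' : ∀ (i : Fin P) (n : ℕ), ν i * n * T = (b i : ℝ) * n / N := by
    intro i n; rw [hν]; field_simp
  have hτ' : ∀ (i : Fin P) (m : ℕ), (ν i + m * Δf) * τ i = ν i * τ i + (a i : ℝ) * m / M := by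
    intro i m
    rw [hτ i]
    field_simp
  -- canonical flattened term
  set G : ℕ → ℕ → Fin P → ℕ → ℕ → ℂ := fun n m i k' l' =>
    (h i * Complex.exp (-(2 * Real.pi * Complex.I) * ((ν i * τ i : ℝ) : ℂ))) *
      ((1 : ℂ) / ((M : ℂ) * (N : ℂ))) * x k' l' *
      Complex.exp (2 * Real.pi * Complex.I * (((b i + (k' : ℤ) - (k : ℤ) : ℤ) : ℂ) * n / N)) *
      Complex.exp (2 * Real.pi * Complex.I * ((((l : ℤ) - a i - (l' : ℤ) : ℤ) : ℂ) * m / M))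
    with hG
  have step1 : xhat k l = ∑ n ∈ Finset.range N, ∑ m ∈ Finset.range M,
      ∑ k' ∈ Finset.range N, ∑ l' ∈ Finset.range M, ∑ i : Fin P, G n m i k' l' := by
    rw [hxhat]
    simp only [hWrx, hY, hHc, hX, hWtx, one_mul, Finset.sum_mul, Finset.mul_sum]
    refine Finset.sum_congr rfl fun n _ => Finset.sum_congr rfl fun m _ =>
      Finset.sum_congr rfl fun k' _ => Finset.sum_congr rfl fun l' _ =>
      Finset.sum_congr rfl fun i _ => ?_
    rw [hG]
    simp only
    have harg : (2 * Real.pi * Complex.I * ((ν i * n * T : ℝ) : ℂ)) +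
        (-(2 * Real.pi * Complex.I) * (((ν i + m * Δf) * τ i : ℝ) : ℂ)) +
        (2 * Real.pi * Complex.I * (((n * k' : ℕ) : ℂ) / (N : ℂ) - ((m * l' : ℕ) : ℂ) / (M : ℂ))) +
        (-(2 * Real.pi * Complex.I) * (((n * k : ℕ) : ℂ) / (N : ℂ) - ((m * l : ℕ) : ℂ) / (M : ℂ)))
        = (-(2 * Real.pi * Complex.I) * ((ν i * τ i : ℝ) : ℂ)) +
          (2 * Real.pi * Complex.I * (((b i + (k' : ℤ) - (k : ℤ) : ℤ) : ℂ) * n / N)) +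
          (2 * Real.pi * Complex.I * ((((l : ℤ) - a i - (l' : ℤ) : ℤ) : ℂ) * m / M)) := by
      rw [hν' i n, hτ' i m]
      push_cast
      field_simp
      ring
    have e : Complex.exp (2 * Real.pi * Complex.I * ((ν i * n * T : ℝ) : ℂ)) *
        Complex.exp (-(2 * Real.pi * Complex.I) * (((ν i + m * Δf) * τ i : ℝ) : ℂ)) *
        Complex.exp (2 * Real.pi * Complex.I * (((n * k' : ℕ) : ℂ) / (N : ℂ) - ((m * l' : ℕ) : ℂ) / (M : ℂ))) *
        Complex.exp (-(2 * Real.pi * Complex.I) * (((n * k : ℕ) : ℂ) / (N : ℂ) - ((m * l : ℕ) : ℂ) / (M : ℂ)))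
        = Complex.exp (-(2 * Real.pi * Complex.I) * ((ν i * τ i : ℝ) : ℂ)) *
          Complex.exp (2 * Real.pi * Complex.I * (((b i + (k' : ℤ) - (k : ℤ) : ℤ) : ℂ) * n / N)) *
          Complex.exp (2 * Real.pi * Complex.I * ((((l : ℤ) - a i - (l' : ℤ) : ℤ) : ℂ) * m / M)) := by
      rw [← Complex.exp_add, ← Complex.exp_add, ← Complex.exp_add, harg, Complex.exp_add, Complex.exp_add]
    linear_combination (x k' l' * ((1 : ℂ) / ((M : ℂ) * (N : ℂ))) * h i) * e
  rw [step1, sumSwap5, sumSwap3]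
  refine Finset.sum_congr rfl fun i _ => ?_
  -- path-wise data
  set k0 : ℕ := (((k : ℤ) - b i) % (N : ℤ)).toNat with hk0def
  set l0 : ℕ := (((l : ℤ) - a i) % (M : ℤ)).toNat with hl0def
  have hNz : (N : ℤ) ≠ 0 := by exact_mod_cast hN.ne'
  have hMz : (M : ℤ) ≠ 0 := by exact_mod_cast hM.ne'
  have hk0cast : (k0 : ℤ) = ((k : ℤ) - b i) % (N : ℤ) :=
    Int.toNat_of_nonneg (Int.emod_nonneg _ hNz)
  have hl0cast : (l0 : ℤ) = ((l : ℤ) - a i) % (M : ℤ) :=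
    Int.toNat_of_nonneg (Int.emod_nonneg _ hMz)
  have hk0mem : k0 ∈ Finset.range N := by
    rw [Finset.mem_range]
    have := Int.emod_lt_of_pos ((k : ℤ) - b i) (by exact_mod_cast hN : (0:ℤ) < N)
    omega
  have hl0mem : l0 ∈ Finset.range M := by
    rw [Finset.mem_range]
    have := Int.emod_lt_of_pos ((l : ℤ) - a i) (by exact_mod_cast hM : (0:ℤ) < M)
    omega
  have hpN : ∀ k' ∈ Finset.range N, ((N : ℤ) ∣ (b i + (k' : ℤ) - (k : ℤ))) ↔ k' = k0 := by
    intro k' hk'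
    rw [Finset.mem_range] at hk'
    constructor
    · intro hdvd
      have h1 : (N : ℤ) ∣ ((k : ℤ) - b i) - (k' : ℤ) := by
        have hre : ((k : ℤ) - b i) - (k' : ℤ) = -(b i + (k' : ℤ) - (k : ℤ)) := by ring
        rw [hre]
        exact dvd_neg.mpr hdvd
      have h2 : (k' : ℤ) % (N : ℤ) = ((k : ℤ) - b i) % (N : ℤ) :=
        Int.modEq_iff_dvd.mpr h1
      have h3 : (k' : ℤ) % (N : ℤ) = (k' : ℤ) :=
        Int.emod_eq_of_lt (by positivity) (by exact_mod_cast hk')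
      omega
    · rintro rfl
      have h1 : (N : ℤ) ∣ ((k : ℤ) - b i) - (((k : ℤ) - b i) % (N : ℤ)) :=
        Int.dvd_self_sub_of_emod_eq rfl
      have hre : b i + (k0 : ℤ) - (k : ℤ) = -(((k : ℤ) - b i) - (((k : ℤ) - b i) % (N : ℤ))) := by
        rw [hk0cast]; ring
      rw [hre]
      exact dvd_neg.mpr h1
  have hpM : ∀ l' ∈ Finset.range M, ((M : ℤ) ∣ ((l : ℤ) - a i - (l' : ℤ))) ↔ l' = l0 := by
    intro l' hl'
    rw [Finset.mem_range] at hl'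
    constructor
    · intro hdvd
      have h2 : (l' : ℤ) % (M : ℤ) = ((l : ℤ) - a i) % (M : ℤ) :=
        Int.modEq_iff_dvd.mpr hdvd
      have h3 : (l' : ℤ) % (M : ℤ) = (l' : ℤ) :=
        Int.emod_eq_of_lt (by positivity) (by exact_mod_cast hl')
      omega
    · rintro rfl
      have h1 : (M : ℤ) ∣ ((l : ℤ) - a i) - (((l : ℤ) - a i) % (M : ℤ)) :=
        Int.dvd_self_sub_of_emod_eq rfl
      have hre : (l : ℤ) - a i - (l0 : ℤ) = ((l : ℤ) - a i) - (((l : ℤ) - a i) % (M : ℤ)) := by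
        rw [hl0cast]
      rw [hre]
      exact h1
  set C : ℂ := h i * Complex.exp (-(2 * Real.pi * Complex.I) * ((ν i * τ i : ℝ) : ℂ)) *
      ((1 : ℂ) / ((M : ℂ) * (N : ℂ))) with hC
  have inner : ∀ k' l' : ℕ, ∑ n ∈ Finset.range N, ∑ m ∈ Finset.range M, G n m i k' l'
      = (if (N : ℤ) ∣ (b i + (k' : ℤ) - (k : ℤ)) then (N : ℂ) else 0) *
        ((if (M : ℤ) ∣ ((l : ℤ) - a i - (l' : ℤ)) then (M : ℂ) else 0) * (C * x k' l')) := by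
    intro k' l'
    have expand : (∑ n ∈ Finset.range N,
          Complex.exp (2 * Real.pi * Complex.I * (((b i + (k' : ℤ) - (k : ℤ) : ℤ) : ℂ) * n / N))) *
        ((∑ m ∈ Finset.range M,
          Complex.exp (2 * Real.pi * Complex.I * ((((l : ℤ) - a i - (l' : ℤ) : ℤ) : ℂ) * m / M))) *
        (C * x k' l'))
        = ∑ n ∈ Finset.range N, ∑ m ∈ Finset.range M, G n m i k' l' := by
      rw [Finset.sum_mul]
      refine Finset.sum_congr rfl fun n _ => ?_
      rw [Finset.sum_mul, Finset.mul_sum]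
      refine Finset.sum_congr rfl fun m _ => ?_
      simp only [hG, hC]
      ring
    rw [← expand, expSumOrtho N hN _, expSumOrtho M hM _]
  calc ∑ k' ∈ Finset.range N, ∑ l' ∈ Finset.range M,
        ∑ n ∈ Finset.range N, ∑ m ∈ Finset.range M, G n m i k' l'
      = ∑ k' ∈ Finset.range N,
          (if (N : ℤ) ∣ (b i + (k' : ℤ) - (k : ℤ)) then (N : ℂ) else 0) *
          ∑ l' ∈ Finset.range M,
            (if (M : ℤ) ∣ ((l : ℤ) - a i - (l' : ℤ)) then (M : ℂ) else 0) * (C * x k' l') := by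
        refine Finset.sum_congr rfl fun k' _ => ?_
        rw [Finset.mul_sum]
        exact Finset.sum_congr rfl fun l' _ => inner k' l'
    _ = ∑ k' ∈ Finset.range N,
          (if (N : ℤ) ∣ (b i + (k' : ℤ) - (k : ℤ)) then (N : ℂ) else 0) *
          ((M : ℂ) * (C * x k' l0)) := by
        refine Finset.sum_congr rfl fun k' _ => ?_
        rw [sumDeltaEval M l0 hl0mem _ hpM (M : ℂ) (fun l' => C * x k' l')]
    _ = (N : ℂ) * ((M : ℂ) * (C * x k0 l0)) :=
        sumDeltaEval N k0 hk0mem _ hpN (N : ℂ) (fun k' => (M : ℂ) * (C * x k' l0))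
    _ = (h i * Complex.exp (-(2 * Real.pi * Complex.I) * ((ν i * τ i : ℝ) : ℂ))) * x k0 l0 := by
        rw [hC]
        field_simp
end

section
/- Assume in addition that the windows are rectangular, W_tx[n,m] = W_rx[n,m] = 1 for all n, m, that the delays lie on the lattice, τ_i = a_i/(MΔf) with a_i ∈ ℤ, and that the Dopplers have a fractional part: ν_i = (b_i + γ_i)/(NT) with b_i ∈ ℤ and 0 < γ_i < 1 for every i = 1,…,P. Then for all integers k, l with 0 ≤ k ≤ N−1 and 0 ≤ l ≤ M−1: x̂[k,l] = Σ_{i=1}^P Σ_{q=0}^{N−1} h_i' · (e^{2πi γ_i} − 1) / (N·(e^{2πi(q+γ_i)/N} − 1)) · x[(k − b_i + q) mod N, (l − a_i) mod M], where h_i' = h_i e^{−2πi ν_i τ_i}. (The q ≠ 0 terms constitute the inter-Doppler interference caused by the fractional Dopplers γ_i.) -/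
open Finset

noncomputable def ee (θ : ℝ) : ℂ := Complex.exp (2 * Real.pi * Complex.I * θ)

lemma ee_add (s t : ℝ) : ee (s + t) = ee s * ee t := by
  rw [ee, ee, ee, ← Complex.exp_add]; push_cast; ring_nf

lemma ee_int (n : ℤ) : ee n = 1 := by
  rw [ee]
  have := Complex.exp_int_mul_two_pi_mul_I n
  rw [← this]; push_cast; ring_nf

lemma ee_eq_one_iff (θ : ℝ) : ee θ = 1 ↔ ∃ n : ℤ, θ = n := by
  rw [ee, Complex.exp_eq_one_iff]
  constructor
  · rintro ⟨n, hn⟩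
    refine ⟨n, ?_⟩
    have h2 := Complex.two_pi_I_ne_zero
    have hθ : (θ : ℂ) = n := by
      have h' : (2 * Real.pi * Complex.I : ℂ) * θ = (2 * Real.pi * Complex.I : ℂ) * n := by
        rw [hn]; ring
      exact mul_left_cancel₀ h2 h'
    exact_mod_cast hθ
  · rintro ⟨n, hn⟩
    exact ⟨n, by rw [hn]; push_cast; ring⟩

lemma ee_nat_mul (n : ℕ) (θ : ℝ) : ee (n * θ) = (ee θ) ^ n := by
  rw [ee, ee, ← Complex.exp_nat_mul]; push_cast; ring_nf

lemma sum_ee_int_div (M : ℕ) (hM : 0 < M) (c : ℤ) :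
    ∑ m ∈ range M, ee (m * ((c : ℝ) / M)) = if (M : ℤ) ∣ c then (M : ℂ) else 0 := by
  have hMR : (M : ℝ) ≠ 0 := Nat.cast_ne_zero.mpr hM.ne'
  simp only [ee_nat_mul]
  by_cases hd : (M : ℤ) ∣ c
  · obtain ⟨d, rfl⟩ := hd
    have : ((M * d : ℤ) : ℝ) / M = ((d : ℤ) : ℝ) := by push_cast; field_simp
    rw [this, ee_int]
    simp [dvd_mul_right]
  · have hz : ee ((c : ℝ) / M) ≠ 1 := by
      intro hone
      rw [ee_eq_one_iff] at hone
      obtain ⟨n, hn⟩ := hone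
      apply hd
      refine ⟨n, ?_⟩
      have : (c : ℝ) = M * n := by field_simp at hn; linarith [hn]
      exact_mod_cast this
    rw [geom_sum_eq hz]
    have hpow : ee ((c : ℝ) / M) ^ M = 1 := by
      rw [← ee_nat_mul]
      have : (M : ℝ) * ((c : ℝ) / M) = ((c : ℤ) : ℝ) := by field_simp
      rw [this, ee_int]
    rw [hpow]
    simp [hd]

lemma sum_ee_frac (N : ℕ) (hN : 0 < N) (c : ℤ) (g : ℝ) (h0 : 0 < g) (h1 : g < 1) :
    ∑ n ∈ range N, ee (n * (((c : ℝ) + g) / N)) =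
      (ee g - 1) / (ee (((c : ℝ) + g) / N) - 1) := by
  have hNR : (N : ℝ) ≠ 0 := Nat.cast_ne_zero.mpr hN.ne'
  simp only [ee_nat_mul]
  have hz : ee (((c : ℝ) + g) / N) ≠ 1 := by
    intro hone
    rw [ee_eq_one_iff] at hone
    obtain ⟨n, hn⟩ := hone
    have hg : g = (N * n - c : ℤ) := by push_cast; field_simp at hn; linarith [hn]
    have : (0 : ℝ) < ((N * n - c : ℤ) : ℝ) := hg ▸ h0
    have : ((N * n - c : ℤ) : ℝ) < 1 := hg ▸ h1
    have h0' : (0 : ℤ) < N * n - c := by exact_mod_cast ‹(0:ℝ) < ((N * n - c : ℤ) : ℝ)›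
    have h1' : (N * n - c : ℤ) < 1 := by exact_mod_cast ‹((N * n - c : ℤ) : ℝ) < 1›
    omega
  rw [geom_sum_eq hz]
  congr 1
  rw [← ee_nat_mul]
  have : (N : ℝ) * (((c : ℝ) + g) / N) = ((c : ℤ) : ℝ) + g := by field_simp
  rw [this]
  have := ee_add ((c : ℤ) : ℝ) g
  rw [this, ee_int, one_mul]

lemma exp_to_ee (θ : ℝ) : Complex.exp (2 * Real.pi * Complex.I * (θ : ℂ)) = ee θ := rfl

lemma exp_neg_to_ee (θ : ℝ) :
    Complex.exp (-(2 * Real.pi * Complex.I) * (θ : ℂ)) = ee (-θ) := by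
  rw [← exp_to_ee]; congr 1; push_cast; ring

lemma exp_nat_frac (n k m l N M : ℕ) :
    Complex.exp (2 * Real.pi * Complex.I *
      (((n * k : ℕ) : ℂ) / (N : ℂ) - ((m * l : ℕ) : ℂ) / (M : ℂ))) =
    ee (((n * k : ℕ) : ℝ) / (N : ℝ) - ((m * l : ℕ) : ℝ) / (M : ℝ)) := by
  rw [← exp_to_ee]; congr 1; push_cast; ring

lemma exp_neg_nat_frac (n k m l N M : ℕ) :
    Complex.exp (-(2 * Real.pi * Complex.I) *
      (((n * k : ℕ) : ℂ) / (N : ℂ) - ((m * l : ℕ) : ℂ) / (M : ℂ))) =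
    ee (-(((n * k : ℕ) : ℝ) / (N : ℝ) - ((m * l : ℕ) : ℝ) / (M : ℝ))) := by
  rw [← exp_to_ee]; push_cast; congr 1; push_cast; ring

lemma sum_comm3 {β γ δ α : Type*} [AddCommMonoid α] {t1 : Finset β} {t2 : Finset γ}
    {t3 : Finset δ} (g : β → γ → δ → α) :
    ∑ a ∈ t1, ∑ b ∈ t2, ∑ c ∈ t3, g a b c = ∑ c ∈ t3, ∑ a ∈ t1, ∑ b ∈ t2, g a b c := by
  trans ∑ a ∈ t1, ∑ c ∈ t3, ∑ b ∈ t2, g a b c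
  · exact Finset.sum_congr rfl fun a _ => Finset.sum_comm
  · exact Finset.sum_comm

lemma sum_reorder5 {ι₁ ι₂ ι₃ ι₄ ι₅ α : Type*} [AddCommMonoid α]
    (s1 : Finset ι₁) (s2 : Finset ι₂) (s3 : Finset ι₃) (s4 : Finset ι₄) (s5 : Finset ι₅)
    (f : ι₁ → ι₂ → ι₃ → ι₄ → ι₅ → α) :
    ∑ n ∈ s1, ∑ m ∈ s2, ∑ i ∈ s3, ∑ p ∈ s4, ∑ q ∈ s5, f n m i p q
      = ∑ i ∈ s3, ∑ p ∈ s4, ∑ q ∈ s5, ∑ n ∈ s1, ∑ m ∈ s2, f n m i p q := by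
  calc ∑ n ∈ s1, ∑ m ∈ s2, ∑ i ∈ s3, ∑ p ∈ s4, ∑ q ∈ s5, f n m i p q
      = ∑ i ∈ s3, ∑ n ∈ s1, ∑ m ∈ s2, ∑ p ∈ s4, ∑ q ∈ s5, f n m i p q := sum_comm3 _
    _ = ∑ i ∈ s3, ∑ p ∈ s4, ∑ n ∈ s1, ∑ m ∈ s2, ∑ q ∈ s5, f n m i p q :=
        Finset.sum_congr rfl fun i _ => sum_comm3 _
    _ = ∑ i ∈ s3, ∑ p ∈ s4, ∑ q ∈ s5, ∑ n ∈ s1, ∑ m ∈ s2, f n m i p q :=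
        Finset.sum_congr rfl fun i _ => Finset.sum_congr rfl fun p _ => sum_comm3 _

lemma sum_reorder5' {ι₁ ι₂ ι₃ ι₄ ι₅ α : Type*} [AddCommMonoid α]
    (s1 : Finset ι₁) (s2 : Finset ι₂) (s3 : Finset ι₃) (s4 : Finset ι₄) (s5 : Finset ι₅)
    (f : ι₁ → ι₂ → ι₃ → ι₄ → ι₅ → α) :
    ∑ n ∈ s1, ∑ m ∈ s2, ∑ p ∈ s4, ∑ q ∈ s5, ∑ i ∈ s3, f n m i p q
      = ∑ i ∈ s3, ∑ p ∈ s4, ∑ q ∈ s5, ∑ n ∈ s1, ∑ m ∈ s2, f n m i p q := by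
  calc ∑ n ∈ s1, ∑ m ∈ s2, ∑ p ∈ s4, ∑ q ∈ s5, ∑ i ∈ s3, f n m i p q
      = ∑ n ∈ s1, ∑ m ∈ s2, ∑ i ∈ s3, ∑ p ∈ s4, ∑ q ∈ s5, f n m i p q :=
        Finset.sum_congr rfl fun n _ => Finset.sum_congr rfl fun m _ => sum_comm3 _
    _ = _ := sum_reorder5 _ _ _ _ _ _

lemma combine_ee (A C X1 : ℂ) (p q r s u v w : ℝ) (hpqrs : p + q + r + s = u + v + w) :
    A * ee p * ee q * (C * (X1 * ee r)) * ee s = A * ee u * C * X1 * ee v * ee w := by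
  have h1 : ee p * ee q * ee r * ee s = ee u * (ee v * ee w) := by
    rw [← ee_add, ← ee_add, ← ee_add, ← ee_add, ← ee_add]
    congr 1
    linarith [hpqrs]
  calc A * ee p * ee q * (C * (X1 * ee r)) * ee s
      = A * C * X1 * (ee p * ee q * ee r * ee s) := by ring
    _ = A * C * X1 * (ee u * (ee v * ee w)) := by rw [h1]
    _ = A * ee u * C * X1 * ee v * ee w := by ring

lemma ee_shift (s : ℝ) (d : ℤ) : ee (s + d) = ee s := by
  rw [ee_add, ee_int, mul_one]

lemma sum_sum_factor (N M : ℕ) (K : ℂ) (s t : ℝ) :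
    ∑ n ∈ range N, ∑ m ∈ range M, K * ee (n * s) * ee (m * t)
      = K * (∑ n ∈ range N, ee (n * s)) * (∑ m ∈ range M, ee (m * t)) := by
  calc ∑ n ∈ range N, ∑ m ∈ range M, K * ee (↑n * s) * ee (↑m * t)
      = ∑ n ∈ range N, (K * ee (↑n * s)) * ∑ m ∈ range M, ee (↑m * t) := by
        exact Finset.sum_congr rfl fun n _ => by rw [Finset.mul_sum]
    _ = (∑ n ∈ range N, K * ee (↑n * s)) * ∑ m ∈ range M, ee (↑m * t) := by
        rw [← Finset.sum_mul]
    _ = (K * ∑ n ∈ range N, ee (↑n * s)) * ∑ m ∈ range M, ee (↑m * t) := by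
        rw [← Finset.mul_sum]
    _ = _ := by ring

lemma ee_frac_ne_one (N : ℕ) (hN : 0 < N) (c : ℤ) (g : ℝ) (h0 : 0 < g) (h1 : g < 1) :
    ee (((c : ℝ) + g) / N) ≠ 1 := by
  have hNR : (N : ℝ) ≠ 0 := Nat.cast_ne_zero.mpr hN.ne'
  intro hone
  rw [ee_eq_one_iff] at hone
  obtain ⟨n, hn⟩ := hone
  have hg : g = (N * n - c : ℤ) := by push_cast; field_simp at hn; linarith [hn]
  have h2 : (0 : ℝ) < ((N * n - c : ℤ) : ℝ) := hg ▸ h0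
  have h3 : ((N * n - c : ℤ) : ℝ) < 1 := hg ▸ h1
  have h0' : (0 : ℤ) < N * n - c := by exact_mod_cast h2
  have h1' : (N * n - c : ℤ) < 1 := by exact_mod_cast h3
  omega


/-- With rectangular windows, lattice-aligned delays, and fractional Dopplers
`ν_i = (b_i + γ_i)/(NT)` with `0 < γ_i < 1`, the OTFS input-output relation
exhibits inter-Doppler interference: each path spreads over all `N` Doppler
taps with coefficients `(e^{2πi γ_i} − 1)/(N (e^{2πi (q+γ_i)/N} − 1))`. -/
theorem otfs_fractional_doppler_interference
    (N M : ℕ) (hN : 0 < N) (hM : 0 < M)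
    (T Δf : ℝ) (hT : 0 < T) (hΔf : 0 < Δf)
    (x : ℕ → ℕ → ℂ)
    (P : ℕ) (h : Fin P → ℂ) (τ ν : Fin P → ℝ)
    (a b : Fin P → ℤ) (γ : Fin P → ℝ)
    (hγ : ∀ i, 0 < γ i ∧ γ i < 1)
    (hτ : ∀ i, τ i = (a i : ℝ) / ((M : ℝ) * Δf))
    (hν : ∀ i, ν i = ((b i : ℝ) + γ i) / ((N : ℝ) * T))
    (Wtx Wrx : ℕ → ℕ → ℂ)
    (hWtx : ∀ n m : ℕ, Wtx n m = 1) (hWrx : ∀ n m : ℕ, Wrx n m = 1)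
    (X : ℕ → ℕ → ℂ)
    (hX : ∀ n m : ℕ, X n m = Wtx n m * ((1 : ℂ) / ((M : ℂ) * (N : ℂ))) *
      ∑ k ∈ Finset.range N, ∑ l ∈ Finset.range M,
        x k l * Complex.exp (2 * Real.pi * Complex.I *
          (((n * k : ℕ) : ℂ) / (N : ℂ) - ((m * l : ℕ) : ℂ) / (M : ℂ))))
    (Hc : ℕ → ℕ → ℂ)
    (hHc : ∀ n m : ℕ, Hc n m = ∑ i : Fin P,
      h i * Complex.exp (2 * Real.pi * Complex.I * ((ν i * n * T : ℝ) : ℂ)) *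
        Complex.exp (-(2 * Real.pi * Complex.I) * (((ν i + m * Δf) * τ i : ℝ) : ℂ)))
    (Y : ℕ → ℕ → ℂ) (hY : ∀ n m : ℕ, Y n m = Hc n m * X n m)
    (xhat : ℕ → ℕ → ℂ)
    (hxhat : ∀ k l : ℕ, xhat k l = ∑ n ∈ Finset.range N, ∑ m ∈ Finset.range M,
      Wrx n m * Y n m * Complex.exp (-(2 * Real.pi * Complex.I) *
        (((n * k : ℕ) : ℂ) / (N : ℂ) - ((m * l : ℕ) : ℂ) / (M : ℂ)))) :
    ∀ k < N, ∀ l < M,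
      xhat k l = ∑ i : Fin P, ∑ q ∈ Finset.range N,
        (h i * Complex.exp (-(2 * Real.pi * Complex.I) * ((ν i * τ i : ℝ) : ℂ))) *
          ((Complex.exp (2 * Real.pi * Complex.I * ((γ i : ℝ) : ℂ)) - 1) /
            ((N : ℂ) * (Complex.exp (2 * Real.pi * Complex.I *
              ((((q : ℝ) + γ i) / (N : ℝ) : ℝ) : ℂ)) - 1))) *
          x ((((k : ℤ) - b i + q) % (N : ℤ)).toNat) ((((l : ℤ) - a i) % (M : ℤ)).toNat) := by
  intro k hk l hl
  have hNC : (N : ℂ) ≠ 0 := Nat.cast_ne_zero.mpr hN.ne'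
  have hMC : (M : ℂ) ≠ 0 := Nat.cast_ne_zero.mpr hM.ne'
  have hNR : (N : ℝ) ≠ 0 := Nat.cast_ne_zero.mpr hN.ne'
  have hMR : (M : ℝ) ≠ 0 := Nat.cast_ne_zero.mpr hM.ne'
  -- Step 1 : expand and reorder into a 5-fold sum of clean terms
  have hL : xhat k l = ∑ i : Fin P, ∑ k' ∈ Finset.range N, ∑ l' ∈ Finset.range M,
      ∑ n ∈ Finset.range N, ∑ m ∈ Finset.range M,
        h i * ee (-(ν i * τ i)) * ((1 : ℂ) / ((M : ℂ) * (N : ℂ))) * x k' l'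
          * ee ((n : ℕ) * ((((((k' : ℤ) - (k : ℤ) + b i) : ℤ) : ℝ) + γ i) / (N : ℝ)))
          * ee ((m : ℕ) * (((((l : ℤ) - (l' : ℤ) - a i) : ℤ) : ℝ) / (M : ℝ))) := by
    simp only [hxhat, hY, hHc, hX, hWtx, hWrx, one_mul]
    simp only [Finset.sum_mul, Finset.mul_sum]
    rw [sum_reorder5']
    refine Finset.sum_congr rfl fun i _ => Finset.sum_congr rfl fun k' _ =>
      Finset.sum_congr rfl fun l' _ => Finset.sum_congr rfl fun n _ =>
      Finset.sum_congr rfl fun m _ => ?_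
    rw [exp_to_ee, exp_neg_to_ee, exp_nat_frac, exp_neg_nat_frac]
    apply combine_ee
    rw [hν i, hτ i]
    push_cast
    field_simp
    ring
  rw [hL]
  simp only [exp_to_ee, exp_neg_to_ee]
  refine Finset.sum_congr rfl fun i _ => ?_
  have hγ1 := (hγ i).1
  have hγ2 := (hγ i).2
  have hMZ : ((M : ℕ) : ℤ) ≠ 0 := by exact_mod_cast hM.ne'
  have hNZ : ((N : ℕ) : ℤ) ≠ 0 := by exact_mod_cast hN.ne'
  have hMposZ : (0 : ℤ) < (M : ℤ) := by exact_mod_cast hM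
  have hNposZ : (0 : ℤ) < (N : ℤ) := by exact_mod_cast hN
  trans (∑ k' ∈ Finset.range N, ∑ l' ∈ Finset.range M,
      h i * ee (-(ν i * τ i)) * ((1 : ℂ) / ((M : ℂ) * (N : ℂ))) * x k' l'
        * ((ee (γ i) - 1) /
            (ee ((((((k' : ℤ) - (k : ℤ) + b i) : ℤ) : ℝ) + γ i) / (N : ℝ)) - 1))
        * (if ((M : ℕ) : ℤ) ∣ ((l : ℤ) - (l' : ℤ) - a i) then ((M : ℕ) : ℂ) else 0))
  · refine Finset.sum_congr rfl fun k' _ => Finset.sum_congr rfl fun l' _ => ?_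
    rw [sum_sum_factor, sum_ee_frac N hN ((k' : ℤ) - (k : ℤ) + b i) (γ i) hγ1 hγ2,
        sum_ee_int_div M hM ((l : ℤ) - (l' : ℤ) - a i)]
  trans (∑ k' ∈ Finset.range N,
      h i * ee (-(ν i * τ i)) * ((1 : ℂ) / ((M : ℂ) * (N : ℂ)))
        * x k' ((((l : ℤ) - a i) % (M : ℤ)).toNat)
        * ((ee (γ i) - 1) /
            (ee ((((((k' : ℤ) - (k : ℤ) + b i) : ℤ) : ℝ) + γ i) / (N : ℝ)) - 1))
        * ((M : ℕ) : ℂ))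
  · refine Finset.sum_congr rfl fun k' _ => ?_
    set l0 : ℕ := (((l : ℤ) - a i) % (M : ℤ)).toNat with hl0def
    have hl0M : (l0 : ℤ) = ((l : ℤ) - a i) % (M : ℤ) :=
      Int.toNat_of_nonneg (Int.emod_nonneg _ hMZ)
    have hl0lt : l0 < M := by
      have h1 := Int.emod_lt_of_pos ((l : ℤ) - a i) hMposZ
      omega
    have hkey : (l : ℤ) - (a i) - l0 = (M : ℤ) * (((l : ℤ) - a i) / (M : ℤ)) := by
      rw [hl0M, Int.emod_def]; ring
    rw [Finset.sum_eq_single_of_mem l0 (Finset.mem_range.mpr hl0lt)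
      (fun l' hl' hne => ?_)]
    · rw [if_pos ⟨((l : ℤ) - a i) / (M : ℤ), by linarith [hkey]⟩]
    · rw [if_neg, mul_zero]
      intro hdvd
      apply hne
      obtain ⟨d, hd⟩ := hdvd
      have hsub : (l0 : ℤ) - l' = (M : ℤ) * (d - ((l : ℤ) - a i) / (M : ℤ)) := by
        rw [mul_sub, ← hd, ← hkey]; ring
      have hlt : (l' : ℤ) < M := by exact_mod_cast Finset.mem_range.mp hl'
      have hzero : (l0 : ℤ) - l' = 0 := by
        refine Int.eq_zero_of_abs_lt_dvd ⟨d - ((l : ℤ) - a i) / (M : ℤ), hsub⟩ ?_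
        rw [abs_lt]
        constructor <;> omega
      omega
  · refine (Finset.sum_nbij' (i := fun q : ℕ => (((k : ℤ) - b i + (q : ℤ)) % (N : ℤ)).toNat)
      (j := fun k' : ℕ => (((k' : ℤ) - (k : ℤ) + b i) % (N : ℤ)).toNat)
      ?_ ?_ ?_ ?_ ?_).symm
    · intro q hq
      have h1 := Int.emod_lt_of_pos ((k : ℤ) - b i + (q : ℤ)) hNposZ
      have h2 := Int.emod_nonneg ((k : ℤ) - b i + (q : ℤ)) hNZ
      simp only [Finset.mem_range]
      omega
    · intro k' hk'
      have h1 := Int.emod_lt_of_pos ((k' : ℤ) - (k : ℤ) + b i) hNposZ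
      have h2 := Int.emod_nonneg ((k' : ℤ) - (k : ℤ) + b i) hNZ
      simp only [Finset.mem_range]
      omega
    · intro q hq
      have hqlt : (q : ℤ) < N := by exact_mod_cast Finset.mem_range.mp hq
      have h2 := Int.emod_nonneg ((k : ℤ) - b i + (q : ℤ)) hNZ
      have hφ : (((((k : ℤ) - b i + (q : ℤ)) % (N : ℤ)).toNat : ℕ) : ℤ)
          = ((k : ℤ) - b i + (q : ℤ)) % (N : ℤ) := Int.toNat_of_nonneg h2
      have hstep : ((((k : ℤ) - b i + (q : ℤ)) % (N : ℤ)) - (k : ℤ) + b i) % (N : ℤ)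
          = (q : ℤ) := by
        rw [Int.emod_def ((k : ℤ) - b i + (q : ℤ)) (N : ℤ)]
        have hr : (k : ℤ) - b i + (q : ℤ) - (N : ℤ) * (((k : ℤ) - b i + (q : ℤ)) / (N : ℤ))
            - (k : ℤ) + b i
            = (q : ℤ) + (N : ℤ) * (-(((k : ℤ) - b i + (q : ℤ)) / (N : ℤ))) := by ring
        rw [hr, Int.add_mul_emod_self_left, Int.emod_eq_of_lt (by positivity) hqlt]
      simp only [hφ, hstep, Int.toNat_natCast]
    · intro k' hk'
      have hklt : (k' : ℤ) < N := by exact_mod_cast Finset.mem_range.mp hk'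
      have h2 := Int.emod_nonneg ((k' : ℤ) - (k : ℤ) + b i) hNZ
      have hψ : (((((k' : ℤ) - (k : ℤ) + b i) % (N : ℤ)).toNat : ℕ) : ℤ)
          = ((k' : ℤ) - (k : ℤ) + b i) % (N : ℤ) := Int.toNat_of_nonneg h2
      have hstep : ((k : ℤ) - b i + (((k' : ℤ) - (k : ℤ) + b i) % (N : ℤ))) % (N : ℤ)
          = (k' : ℤ) := by
        rw [Int.emod_def ((k' : ℤ) - (k : ℤ) + b i) (N : ℤ)]
        have hr : (k : ℤ) - b i + ((k' : ℤ) - (k : ℤ) + b i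
              - (N : ℤ) * (((k' : ℤ) - (k : ℤ) + b i) / (N : ℤ)))
            = (k' : ℤ) + (N : ℤ) * (-(((k' : ℤ) - (k : ℤ) + b i) / (N : ℤ))) := by ring
        rw [hr, Int.add_mul_emod_self_left, Int.emod_eq_of_lt (by positivity) hklt]
      simp only [hψ, hstep, Int.toNat_natCast]
    · intro q hq
      set k' : ℕ := (((k : ℤ) - b i + (q : ℤ)) % (N : ℤ)).toNat with hk'def
      have h2 := Int.emod_nonneg ((k : ℤ) - b i + (q : ℤ)) hNZ
      have hφ : ((k' : ℕ) : ℤ) = ((k : ℤ) - b i + (q : ℤ)) % (N : ℤ) :=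
        Int.toNat_of_nonneg h2
      set d : ℤ := ((k : ℤ) - b i + (q : ℤ)) / (N : ℤ) with hddef
      have hkq : ((k' : ℤ) - (k : ℤ) + b i : ℤ) = (q : ℤ) - (N : ℤ) * d := by
        rw [hφ, Int.emod_def]; ring
      have hee : ee ((((((k' : ℤ) - (k : ℤ) + b i) : ℤ) : ℝ) + γ i) / (N : ℝ))
          = ee (((q : ℝ) + γ i) / (N : ℝ)) := by
        have harg : (((((k' : ℤ) - (k : ℤ) + b i) : ℤ) : ℝ) + γ i) / (N : ℝ)
            = ((q : ℝ) + γ i) / (N : ℝ) + ((-d : ℤ) : ℝ) := by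
          rw [hkq]; push_cast; field_simp; ring
        rw [harg, ee_shift]
      have hne1 : ee (((q : ℝ) + γ i) / (N : ℝ)) - 1 ≠ 0 := by
        have := ee_frac_ne_one N hN (q : ℤ) (γ i) hγ1 hγ2
        push_cast at this
        exact sub_ne_zero_of_ne this
      rw [hee]
      field_simp
end

section
/- With the above definitions, fix integers k, l with 0 ≤ k ≤ N−1 and 0 ≤ l ≤ M−1, and suppose the windowed channel satisfies h_w((l−m)/(MΔf), (k−n)/(NT)) = 0 for every (n,m) with 0 ≤ n ≤ N−1, 0 ≤ m ≤ M−1 and (n,m) ≠ (k,l). Then the demodulated symbol experiences a single flat fade: x̂[k,l] = (1/(MN)) · h_w(0,0) · x[k,l]. -/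
open Finset

/-- Flat fading in the delay-Doppler domain: if the windowed channel response
`h_w` vanishes at all lattice offsets `((l−m)/(MΔf), (k−n)/(NT))` with
`(n,m) ≠ (k,l)`, then the demodulated OTFS symbol experiences a single flat
fade: `x̂[k,l] = (1/(MN)) h_w(0,0) x[k,l]`. -/
theorem otfs_flat_fading
    (N M : ℕ) (hN : 0 < N) (hM : 0 < M)
    (T Δf : ℝ) (hT : 0 < T) (hΔf : 0 < Δf)
    (x : ℕ → ℕ → ℂ)
    (P : ℕ) (h : Fin P → ℂ) (τ ν : Fin P → ℝ)
    (Wtx Wrx : ℕ → ℕ → ℂ)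
    (X : ℕ → ℕ → ℂ)
    (hX : ∀ n m : ℕ, X n m = Wtx n m * ((1 : ℂ) / ((M : ℂ) * (N : ℂ))) *
      ∑ k ∈ Finset.range N, ∑ l ∈ Finset.range M,
        x k l * Complex.exp (2 * Real.pi * Complex.I *
          (((n * k : ℕ) : ℂ) / (N : ℂ) - ((m * l : ℕ) : ℂ) / (M : ℂ))))
    (Hc : ℕ → ℕ → ℂ)
    (hHc : ∀ n m : ℕ, Hc n m = ∑ i : Fin P,
      h i * Complex.exp (2 * Real.pi * Complex.I * ((ν i * n * T : ℝ) : ℂ)) *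
        Complex.exp (-(2 * Real.pi * Complex.I) * (((ν i + m * Δf) * τ i : ℝ) : ℂ)))
    (Y : ℕ → ℕ → ℂ) (hY : ∀ n m : ℕ, Y n m = Hc n m * X n m)
    (xhat : ℕ → ℕ → ℂ)
    (hxhat : ∀ k l : ℕ, xhat k l = ∑ n ∈ Finset.range N, ∑ m ∈ Finset.range M,
      Wrx n m * Y n m * Complex.exp (-(2 * Real.pi * Complex.I) *
        (((n * k : ℕ) : ℂ) / (N : ℂ) - ((m * l : ℕ) : ℂ) / (M : ℂ))))
    (w : ℝ → ℝ → ℂ)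
    (hw : ∀ τ' ν' : ℝ, w τ' ν' = ∑ n ∈ Finset.range N, ∑ m ∈ Finset.range M,
      Wtx n m * Wrx n m * Complex.exp (-(2 * Real.pi * Complex.I) *
        ((ν' * n * T - τ' * m * Δf : ℝ) : ℂ)))
    (hw_ch : ℝ → ℝ → ℂ)
    (hhw : ∀ τ' ν' : ℝ, hw_ch τ' ν' = ∑ i : Fin P,
      h i * Complex.exp (-(2 * Real.pi * Complex.I) * ((ν i * τ i : ℝ) : ℂ)) *
        w (τ' - τ i) (ν' - ν i))
    (k l : ℕ) (hk : k < N) (hl : l < M)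
    (hzero : ∀ n < N, ∀ m < M, (n, m) ≠ (k, l) →
      hw_ch (((l : ℝ) - (m : ℝ)) / ((M : ℝ) * Δf))
        (((k : ℝ) - (n : ℝ)) / ((N : ℝ) * T)) = 0) :
    xhat k l = ((1 : ℂ) / ((M : ℂ) * (N : ℂ))) * hw_ch 0 0 * x k l := by
  have hNc : (N : ℂ) ≠ 0 := Nat.cast_ne_zero.mpr hN.ne'
  have hMc : (M : ℂ) ≠ 0 := Nat.cast_ne_zero.mpr hM.ne'
  have hTc : (T : ℂ) ≠ 0 := Complex.ofReal_ne_zero.mpr hT.ne'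
  have hDc : (Δf : ℂ) ≠ 0 := Complex.ofReal_ne_zero.mpr hΔf.ne'
  -- swap a `Fin P` sum past a double `range` sum
  have swap3 : ∀ f : ℕ → ℕ → Fin P → ℂ,
      (∑ n ∈ range N, ∑ m ∈ range M, ∑ i : Fin P, f n m i)
        = ∑ i : Fin P, ∑ n ∈ range N, ∑ m ∈ range M, f n m i := by
    intro f
    rw [show (∑ n ∈ range N, ∑ m ∈ range M, ∑ i : Fin P, f n m i)
        = ∑ n ∈ range N, ∑ i : Fin P, ∑ m ∈ range M, f n m i from
      Finset.sum_congr rfl fun n _ => Finset.sum_comm]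
    exact Finset.sum_comm
  -- swap two double `range` sums
  have swap4 : ∀ f : ℕ → ℕ → ℕ → ℕ → ℂ,
      (∑ n ∈ range N, ∑ m ∈ range M, ∑ a ∈ range N, ∑ b ∈ range M, f n m a b)
        = ∑ a ∈ range N, ∑ b ∈ range M, ∑ n ∈ range N, ∑ m ∈ range M, f n m a b := by
    intro f
    calc (∑ n ∈ range N, ∑ m ∈ range M, ∑ a ∈ range N, ∑ b ∈ range M, f n m a b)
        = ∑ n ∈ range N, ∑ a ∈ range N, ∑ m ∈ range M, ∑ b ∈ range M, f n m a b :=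
          Finset.sum_congr rfl fun n _ => Finset.sum_comm
      _ = ∑ a ∈ range N, ∑ n ∈ range N, ∑ m ∈ range M, ∑ b ∈ range M, f n m a b :=
          Finset.sum_comm
      _ = ∑ a ∈ range N, ∑ b ∈ range M, ∑ n ∈ range N, ∑ m ∈ range M, f n m a b :=
          Finset.sum_congr rfl fun a _ =>
            (Finset.sum_congr rfl fun n _ => Finset.sum_comm).trans Finset.sum_comm
  -- the inner time-frequency sum equals the windowed channel at a lattice offset
  have inner : ∀ a b : ℕ,
      (∑ n ∈ range N, ∑ m ∈ range M, Wtx n m * Wrx n m * Hc n m *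
        (Complex.exp (2 * Real.pi * Complex.I *
            (((n * a : ℕ) : ℂ) / (N : ℂ) - ((m * b : ℕ) : ℂ) / (M : ℂ))) *
         Complex.exp (-(2 * Real.pi * Complex.I) *
            (((n * k : ℕ) : ℂ) / (N : ℂ) - ((m * l : ℕ) : ℂ) / (M : ℂ)))))
      = hw_ch (((l : ℝ) - (b : ℝ)) / ((M : ℝ) * Δf))
          (((k : ℝ) - (a : ℝ)) / ((N : ℝ) * T)) := by
    intro a b
    rw [hhw]
    simp only [hw, Finset.mul_sum]
    rw [← swap3 (fun n m i => h i *
        Complex.exp (-(2 * Real.pi * Complex.I) * ((ν i * τ i : ℝ) : ℂ)) *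
        (Wtx n m * Wrx n m * Complex.exp (-(2 * Real.pi * Complex.I) *
          (((((k : ℝ) - (a : ℝ)) / ((N : ℝ) * T) - ν i) * n * T -
            (((l : ℝ) - (b : ℝ)) / ((M : ℝ) * Δf) - τ i) * m * Δf : ℝ) : ℂ))))]
    refine Finset.sum_congr rfl fun n _ => Finset.sum_congr rfl fun m _ => ?_
    simp only [hHc, Finset.mul_sum, Finset.sum_mul]
    refine Finset.sum_congr rfl fun i _ => ?_
    have hE : Complex.exp (2 * Real.pi * Complex.I * ((ν i * n * T : ℝ) : ℂ)) *
        Complex.exp (-(2 * Real.pi * Complex.I) * (((ν i + m * Δf) * τ i : ℝ) : ℂ)) *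
        (Complex.exp (2 * Real.pi * Complex.I *
            (((n * a : ℕ) : ℂ) / (N : ℂ) - ((m * b : ℕ) : ℂ) / (M : ℂ))) *
         Complex.exp (-(2 * Real.pi * Complex.I) *
            (((n * k : ℕ) : ℂ) / (N : ℂ) - ((m * l : ℕ) : ℂ) / (M : ℂ))))
        = Complex.exp (-(2 * Real.pi * Complex.I) * ((ν i * τ i : ℝ) : ℂ)) *
          Complex.exp (-(2 * Real.pi * Complex.I) *
            (((((k : ℝ) - (a : ℝ)) / ((N : ℝ) * T) - ν i) * n * T -
              (((l : ℝ) - (b : ℝ)) / ((M : ℝ) * Δf) - τ i) * m * Δf : ℝ) : ℂ)) := by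
      rw [← Complex.exp_add, ← Complex.exp_add, ← Complex.exp_add, ← Complex.exp_add]
      congr 1
      push_cast
      field_simp
      ring
    linear_combination (Wtx n m * Wrx n m * h i) * hE
  -- expand the demodulated symbol into a quadruple sum
  have step1 : xhat k l = ∑ a ∈ range N, ∑ b ∈ range M,
      ∑ n ∈ range N, ∑ m ∈ range M,
        ((1 : ℂ) / ((M : ℂ) * (N : ℂ))) * x a b *
          (Wtx n m * Wrx n m * Hc n m *
            (Complex.exp (2 * Real.pi * Complex.I *
                (((n * a : ℕ) : ℂ) / (N : ℂ) - ((m * b : ℕ) : ℂ) / (M : ℂ))) *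
             Complex.exp (-(2 * Real.pi * Complex.I) *
                (((n * k : ℕ) : ℂ) / (N : ℂ) - ((m * l : ℕ) : ℂ) / (M : ℂ))))) := by
    rw [← swap4, hxhat]
    refine Finset.sum_congr rfl fun n _ => Finset.sum_congr rfl fun m _ => ?_
    rw [hY, hX]
    simp only [Finset.mul_sum, Finset.sum_mul]
    exact Finset.sum_congr rfl fun a _ => Finset.sum_congr rfl fun b _ => by ring
  rw [step1]
  have step2 : ∀ a ∈ range N, ∀ b ∈ range M,
      (∑ n ∈ range N, ∑ m ∈ range M,
        ((1 : ℂ) / ((M : ℂ) * (N : ℂ))) * x a b *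
          (Wtx n m * Wrx n m * Hc n m *
            (Complex.exp (2 * Real.pi * Complex.I *
                (((n * a : ℕ) : ℂ) / (N : ℂ) - ((m * b : ℕ) : ℂ) / (M : ℂ))) *
             Complex.exp (-(2 * Real.pi * Complex.I) *
                (((n * k : ℕ) : ℂ) / (N : ℂ) - ((m * l : ℕ) : ℂ) / (M : ℂ))))))
      = ((1 : ℂ) / ((M : ℂ) * (N : ℂ))) * x a b *
          hw_ch (((l : ℝ) - (b : ℝ)) / ((M : ℝ) * Δf))
            (((k : ℝ) - (a : ℝ)) / ((N : ℝ) * T)) := by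
    intro a _ b _
    rw [← inner a b]
    simp only [Finset.mul_sum]
  rw [Finset.sum_congr rfl fun a ha => Finset.sum_congr rfl fun b hb => step2 a ha b hb]
  rw [Finset.sum_eq_single_of_mem k (Finset.mem_range.mpr hk)
    (fun a ha hane => Finset.sum_eq_zero fun b hb => by
      rw [hzero a (Finset.mem_range.mp ha) b (Finset.mem_range.mp hb)
        (fun hq => hane (by cases hq; rfl))]
      ring)]
  rw [Finset.sum_eq_single_of_mem l (Finset.mem_range.mpr hl)
    (fun b hb hbne => by
      rw [hzero k hk b (Finset.mem_range.mp hb)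
        (fun hq => hbne (by cases hq; rfl))]
      ring)]
  simp only [sub_self, zero_div]
  ring
end
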